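/- For every unit vector ψ in the linear span of ψ₁ and ψ₂ in ℂ³ ⊗ ℂ³, the six operators E₁,…,E₆ satisfy ∑_{k=1}^{6} E_k |ψ⟩⟨ψ| E_k† = |φ⟩⟨φ|, where φ = √α(β|0⟩⊗|0⟩ + |1⟩⊗|1⟩). Consequently, every density matrix whose support is contained in span{ψ₁, ψ₂} is mapped to |φ⟩⟨φ| by this separable operation. -/

import Mathlib

open Kronecker Matrix ComplexOrder

noncomputable section

/-- Product (simple) vector in `ℂ^a ⊗ ℂ^b`, identified with functions `Fin a × Fin b → ℂ`. -/
def IsSimpleVec {a b : ℕ} (v : Fin a × Fin b → ℂ) : Prop :=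
  ∃ (x : Fin a → ℂ) (y : Fin b → ℂ), v = fun p => x p.1 * y p.2

/-- Rank-one projection `|v⟩⟨v|`. -/
def proj {d : Type*} [Fintype d] (v : d → ℂ) : Matrix d d ℂ :=
  Matrix.vecMulVec v (star v)

/-- The standard basis vector `|i⟩` of `ℂ³`. -/
def e (i : Fin 3) : Fin 3 → ℂ := Pi.single i 1

/-- The matrix unit `|i⟩⟨j|` on `ℂ³`. -/
def u (i j : Fin 3) : Matrix (Fin 3) (Fin 3) ℂ := Matrix.single i j 1

/-- `α = (2 − √3)/4`. -/
def α : ℝ := (2 - Real.sqrt 3) / 4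

/-- `β = 2 + √3`. -/
def β : ℝ := 2 + Real.sqrt 3

/-- `√α` as a complex number. -/
def sα : ℂ := ((Real.sqrt α : ℝ) : ℂ)

/-- `√β` as a complex number. -/
def sβ : ℂ := ((Real.sqrt β : ℝ) : ℂ)

/-- `√(2αβ)` as a complex number. -/
def sγ : ℂ := ((Real.sqrt (2 * α * β) : ℝ) : ℂ)

/-- The six Kraus operators `E₁, …, E₆` on `ℂ³ ⊗ ℂ³`. -/
def E : Fin 6 → Matrix (Fin 3 × Fin 3) (Fin 3 × Fin 3) ℂ :=
  ![sα • ((sβ • u 0 0 + u 1 1) ⊗ₖ (sβ • u 0 1 + u 1 0)),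
    sα • ((u 1 0 + sβ • u 0 1) ⊗ₖ (u 1 1 + sβ • u 0 0)),
    sα • ((sβ • u 0 0 + u 1 2) ⊗ₖ (sβ • u 0 2 + u 1 0)),
    sα • ((u 1 0 + sβ • u 0 2) ⊗ₖ (u 1 2 + sβ • u 0 0)),
    u 1 1 ⊗ₖ (sγ • u 1 1 + u 2 2),
    u 2 2 ⊗ₖ (u 1 1 + sγ • u 2 2)]

/-- `ψ₁ = (|0⟩⊗|1⟩ + |1⟩⊗|0⟩)/√2`. -/
def ψ₁ : Fin 3 × Fin 3 → ℂ :=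
  ((Real.sqrt 2 : ℝ) : ℂ)⁻¹ • (fun p => e 0 p.1 * e 1 p.2 + e 1 p.1 * e 0 p.2)

/-- `ψ₂ = (|0⟩⊗|2⟩ + |2⟩⊗|0⟩)/√2`. -/
def ψ₂ : Fin 3 × Fin 3 → ℂ :=
  ((Real.sqrt 2 : ℝ) : ℂ)⁻¹ • (fun p => e 0 p.1 * e 2 p.2 + e 2 p.1 * e 0 p.2)

/-- `φ = √α(β|0⟩⊗|0⟩ + |1⟩⊗|1⟩)`. -/
def φ : Fin 3 × Fin 3 → ℂ :=
  sα • (fun p => ((β : ℝ) : ℂ) * (e 0 p.1 * e 0 p.2) + e 1 p.1 * e 1 p.2)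

/-!
Each `Eₖ` maps `span {ψ₁, ψ₂}` into the line `ℂ φ`: `Eₖ ψⱼ = cⱼ(k) φ` with
`c₁ = (1, 1, 0, 0, 0, 0)/√2` and `c₂ = (0, 0, 1, 1, 0, 0)/√2`. Hence, with
`P = |ψ₁⟩⟨ψ₁| + |ψ₂⟩⟨ψ₂|`, we get `Eₖ P = |φ⟩⟨aₖ|` for `aₖ = c₁(k) ψ₁ + c₂(k) ψ₂`.
A Hermitian `ρ` supported in the span satisfies `ρ = P ρ P`, so `Eₖ ρ Eₖ† = ⟨aₖ|ρ|aₖ⟩ |φ⟩⟨φ|`.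
Since `c₁` and `c₂` are orthonormal, `∑ₖ |aₖ⟩⟨aₖ| = P`, and the coefficients add up to
`tr (P ρ) = tr ρ = 1`.
-/

section Proj

variable {d ι : Type*} [Fintype d] [Fintype ι]

theorem proj_isHermitian (v : d → ℂ) : (proj v).IsHermitian := by
  simp [Matrix.IsHermitian, proj]

theorem trace_proj (v : d → ℂ) : (proj v).trace = star v ⬝ᵥ v := by
  rw [proj, trace_vecMulVec, dotProduct_comm]

theorem mul_proj_of_mulVec_eq {A : Matrix d d ℂ} {v : d → ℂ} (h : A *ᵥ v = v) :
    A * proj v = proj v := by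
  rw [proj, mul_vecMulVec, h]

theorem vecMulVec_mul_mul_conjTranspose (x a : d → ℂ) (ρ : Matrix d d ℂ) :
    vecMulVec x a * ρ * (vecMulVec x a)ᴴ = ((a ᵥ* ρ) ⬝ᵥ star a) • proj x := by
  rw [vecMulVec_mul, conjTranspose_vecMulVec, vecMulVec_mul_vecMulVec, vecMulVec_smul]
  rfl

theorem dotProduct_vecMul_star_eq_trace (a : d → ℂ) (ρ : Matrix d d ℂ) :
    (a ᵥ* ρ) ⬝ᵥ star a = (ρ * vecMulVec (star a) a).trace := by
  rw [mul_vecMulVec, trace_vecMulVec, dotProduct_comm (ρ *ᵥ _), dotProduct_mulVec]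

theorem sum_mul_mul_conjTranspose_eq_trace_smul_proj (E : ι → Matrix d d ℂ)
    (P ρ : Matrix d d ℂ) (φ : d → ℂ) (a : ι → d → ℂ)
    (hE : ∀ k, E k * P = vecMulVec φ (a k)) (ha : ∑ k, vecMulVec (star (a k)) (a k) = P)
    (hρ : ρ.IsHermitian) (hPρ : P * ρ = ρ) :
    ∑ k, E k * ρ * (E k)ᴴ = ρ.trace • proj φ := by
  have hρP : ρ * Pᴴ = ρ := by
    simpa only [conjTranspose_mul, hρ.eq] using congrArg conjTranspose hPρ
  have hPρP : P * ρ * Pᴴ = ρ := by rw [hPρ, hρP]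
  have hterm : ∀ k, E k * ρ * (E k)ᴴ = ((a k ᵥ* ρ) ⬝ᵥ star (a k)) • proj φ := fun k => by
    rw [← vecMulVec_mul_mul_conjTranspose, ← hE, conjTranspose_mul]
    conv_lhs => rw [← hPρP]
    simp only [Matrix.mul_assoc]
  simp only [hterm, ← Finset.sum_smul, dotProduct_vecMul_star_eq_trace, ← trace_sum,
    ← Matrix.mul_sum, ha, trace_mul_comm ρ P, hPρ]

theorem mul_eq_self_of_range_le {P ρ : Matrix d d ℂ} {S : Submodule ℂ (d → ℂ)}
    (hP : ∀ w ∈ S, P *ᵥ w = w) (hρS : LinearMap.range ρ.mulVecLin ≤ S) : P * ρ = ρ := by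
  refine ext_iff_mulVec.mpr fun x => ?_
  rw [← mulVec_mulVec]
  exact hP _ (hρS (LinearMap.mem_range_self ρ.mulVecLin x))

theorem proj_add_proj_mulVec_of_mem_span {v₁ v₂ w : d → ℂ} (h₁ : star v₁ ⬝ᵥ v₁ = 1)
    (h₂ : star v₂ ⬝ᵥ v₂ = 1) (h₁₂ : star v₁ ⬝ᵥ v₂ = 0) (hw : w ∈ Submodule.span ℂ {v₁, v₂}) :
    (proj v₁ + proj v₂) *ᵥ w = w := by
  obtain ⟨a, b, rfl⟩ := Submodule.mem_span_pair.mp hw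
  have h₂₁ : star v₂ ⬝ᵥ v₁ = 0 := by rw [star_dotProduct, h₁₂, star_zero]
  simp only [proj, add_mulVec, mulVec_add, mulVec_smul, vecMulVec_mulVec, op_smul_eq_smul, h₁, h₂,
    h₁₂, h₂₁]
  module

end Proj

theorem sβ_mul_self : sβ * sβ = β := by
  rw [sβ, ← Complex.ofReal_mul, Real.mul_self_sqrt (by rw [β]; positivity)]

theorem inv_sqrt_two_mul_self : ((Real.sqrt 2 : ℝ) : ℂ)⁻¹ * ((Real.sqrt 2 : ℝ) : ℂ)⁻¹ = 2⁻¹ := by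
  rw [← mul_inv, ← Complex.ofReal_mul, Real.mul_self_sqrt zero_le_two]
  norm_num

def c₁ : Fin 6 → ℂ := ![((Real.sqrt 2 : ℝ) : ℂ)⁻¹, ((Real.sqrt 2 : ℝ) : ℂ)⁻¹, 0, 0, 0, 0]

def c₂ : Fin 6 → ℂ := ![0, 0, ((Real.sqrt 2 : ℝ) : ℂ)⁻¹, ((Real.sqrt 2 : ℝ) : ℂ)⁻¹, 0, 0]

theorem E_mulVec_ψ₁ (k : Fin 6) : E k *ᵥ ψ₁ = c₁ k • φ := by
  ext ⟨i, j⟩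
  fin_cases k <;> fin_cases i <;> fin_cases j <;>
    simp [E, c₁, ψ₁, φ, u, e, mulVec, dotProduct, Fintype.sum_prod_type, single_apply,
      Pi.single_apply, ← sβ_mul_self, mul_comm _ ((Real.sqrt 2 : ℝ) : ℂ)⁻¹]

theorem E_mulVec_ψ₂ (k : Fin 6) : E k *ᵥ ψ₂ = c₂ k • φ := by
  ext ⟨i, j⟩
  fin_cases k <;> fin_cases i <;> fin_cases j <;>
    simp [E, c₂, ψ₂, φ, u, e, mulVec, dotProduct, Fintype.sum_prod_type, single_apply,
      Pi.single_apply, ← sβ_mul_self, mul_comm _ ((Real.sqrt 2 : ℝ) : ℂ)⁻¹]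

theorem star_ψ₁_dotProduct_ψ₁ : star ψ₁ ⬝ᵥ ψ₁ = 1 := by
  simp [ψ₁, e, dotProduct, Fintype.sum_prod_type, Pi.single_apply, Fin.sum_univ_three,
    Complex.conj_ofReal, inv_sqrt_two_mul_self, ← two_mul]

theorem star_ψ₂_dotProduct_ψ₂ : star ψ₂ ⬝ᵥ ψ₂ = 1 := by
  simp [ψ₂, e, dotProduct, Fintype.sum_prod_type, Pi.single_apply, Fin.sum_univ_three,
    Complex.conj_ofReal, inv_sqrt_two_mul_self, ← two_mul]

theorem star_ψ₁_dotProduct_ψ₂ : star ψ₁ ⬝ᵥ ψ₂ = 0 := by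
  simp [ψ₁, ψ₂, e, dotProduct, Fintype.sum_prod_type, Pi.single_apply, Fin.sum_univ_three]

def krausBra (k : Fin 6) : Fin 3 × Fin 3 → ℂ := c₁ k • star ψ₁ + c₂ k • star ψ₂

theorem E_mul_proj_add_proj (k : Fin 6) :
    E k * (proj ψ₁ + proj ψ₂) = vecMulVec φ (krausBra k) := by
  simp only [krausBra, proj, Matrix.mul_add, mul_vecMulVec, E_mulVec_ψ₁, E_mulVec_ψ₂,
    smul_vecMulVec, vecMulVec_add, vecMulVec_smul]

theorem sum_vecMulVec_star_krausBra :
    ∑ k, vecMulVec (star (krausBra k)) (krausBra k) = proj ψ₁ + proj ψ₂ := by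
  simp [Fin.sum_univ_six, krausBra, c₁, c₂, star_smul, Complex.conj_ofReal, proj, smul_smul,
    inv_sqrt_two_mul_self, ← two_smul ℂ, add_assoc]

theorem sum_E_mul_mul_conjTranspose_eq_proj_φ {ρ : Matrix (Fin 3 × Fin 3) (Fin 3 × Fin 3) ℂ}
    (hρ : ρ.IsHermitian) (htr : ρ.trace = 1) (hP : (proj ψ₁ + proj ψ₂) * ρ = ρ) :
    ∑ k, E k * ρ * (E k)ᴴ = proj φ := by
  rw [sum_mul_mul_conjTranspose_eq_trace_smul_proj E _ ρ φ _ E_mul_proj_add_proj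
    sum_vecMulVec_star_krausBra hρ hP, htr, one_smul]

theorem kraus_maps_span_to_phi :
    (∀ ψ : Fin 3 × Fin 3 → ℂ, ψ ∈ Submodule.span ℂ {ψ₁, ψ₂} → star ψ ⬝ᵥ ψ = 1 →
      ∑ k, E k * proj ψ * (E k)ᴴ = proj φ) ∧
    (∀ ρ : Matrix (Fin 3 × Fin 3) (Fin 3 × Fin 3) ℂ, ρ.PosSemidef → ρ.trace = 1 →
      LinearMap.range ρ.mulVecLin ≤ Submodule.span ℂ {ψ₁, ψ₂} →
      ∑ k, E k * ρ * (E k)ᴴ = proj φ) := by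
  have hfix : ∀ w ∈ Submodule.span ℂ {ψ₁, ψ₂}, (proj ψ₁ + proj ψ₂) *ᵥ w = w := fun _ =>
    proj_add_proj_mulVec_of_mem_span star_ψ₁_dotProduct_ψ₁ star_ψ₂_dotProduct_ψ₂
      star_ψ₁_dotProduct_ψ₂
  refine ⟨fun ψ hψ hnorm => ?_, fun ρ hρ htr hrange => ?_⟩
  · exact sum_E_mul_mul_conjTranspose_eq_proj_φ (proj_isHermitian ψ) (hnorm ▸ trace_proj ψ)
      (mul_proj_of_mulVec_eq (hfix ψ hψ))
  · exact sum_E_mul_mul_conjTranspose_eq_proj_φ hρ.isHermitian htr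
      (mul_eq_self_of_range_le hfix hrange)
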